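/- (Solvability identity for the first corrector.) Let θ₀(y) = (1/2)(1 − tanh(y/(2√2))), let V₀, F ∈ ℝ, let Ψ₀ : ℝ → ℝ be bounded and continuously differentiable with bounded derivative, and let θ₁ : ℝ → ℝ be bounded and three times continuously differentiable with bounded derivatives, satisfying −θ₁''(y) + W''(θ₀(y)) θ₁(y) = −V₀ θ₀'(y) + Ψ₀(y) θ₀'(y) + F for all y ∈ ℝ. Then ∫_ℝ W'''(θ₀(y)) (θ₀'(y))² θ₁(y) dy + ∫_ℝ Ψ₀(y) θ₀'(y) θ₀''(y) dy = 0. -/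

import Mathlib

/-!
Write `φ = θ₀'`. Differentiating the profile equation `θ₀'' = W'(θ₀)` twice gives
`φ''' = W''(θ₀) φ' + W'''(θ₀) φ²`, i.e. `L φ' = -W'''(θ₀) φ²` for `L = -∂² + W''(θ₀)`.
Testing the corrector equation `L θ₁ = -V₀ φ + Ψ₀ φ + F` against `φ'` and moving the
self-adjoint `L` onto `φ'` gives the identity; concretely,
`G = φ'' θ₁ - φ' θ₁' + (V₀/2) φ² - F φ` satisfies `G' = W'''(θ₀) φ² θ₁ + Ψ₀ φ φ'`.
The profile is logistic, `θ₀ = (1 + e^{y/√2})⁻¹`, so `φ = -θ₀(1 - θ₀)/√2 = O((1 + y²)⁻¹)`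
and `θ₀''`, `θ₀'''` are bounded multiples of `φ`. As `θ₁`, `θ₁'` and `Ψ₀` are bounded, `G`
and `G'` are integrable over `ℝ`, hence `∫ G' = 0`.
-/

open Real MeasureTheory Set
open scoped ContDiff

noncomputable def W (ρ : ℝ) : ℝ := (1/4) * ρ^2 * (1 - ρ)^2

noncomputable def theta0 (y : ℝ) : ℝ := (1/2) * (1 - Real.tanh (y / (2 * Real.sqrt 2)))

section Profile

variable {V θ : ℝ → ℝ}

theorem hasDerivAt_deriv_deriv_of_deriv_deriv_eq (hV : Differentiable ℝ (deriv V))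
    (hθ : Differentiable ℝ θ) (hprofile : ∀ y, deriv (deriv θ) y = deriv V (θ y)) (y : ℝ) :
    HasDerivAt (deriv (deriv θ)) (deriv (deriv V) (θ y) * deriv θ y) y := by
  rw [funext hprofile]
  exact (hV (θ y)).hasDerivAt.comp y (hθ y).hasDerivAt

theorem hasDerivAt_deriv_deriv_deriv_of_deriv_deriv_eq (hV : Differentiable ℝ (deriv V))
    (hV' : Differentiable ℝ (deriv (deriv V))) (hθ : Differentiable ℝ θ)
    (hθ' : Differentiable ℝ (deriv θ)) (hprofile : ∀ y, deriv (deriv θ) y = deriv V (θ y))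
    (y : ℝ) :
    HasDerivAt (deriv (deriv (deriv θ)))
      (deriv (deriv (deriv V)) (θ y) * deriv θ y ^ 2
        + deriv (deriv V) (θ y) * deriv (deriv θ) y) y := by
  rw [funext fun y => (hasDerivAt_deriv_deriv_of_deriv_deriv_eq hV hθ hprofile y).deriv]
  have h := ((hV' (θ y)).hasDerivAt.comp y (hθ y).hasDerivAt).fun_mul (hθ' y).hasDerivAt
  exact h.congr_deriv (by rw [Function.comp_apply]; ring)

end Profile

theorem hasDerivAt_solvability_primitive {φ u : ℝ → ℝ} {φ''' a Ψ V₀ F y : ℝ}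
    (hφ : DifferentiableAt ℝ φ y) (hφ' : DifferentiableAt ℝ (deriv φ) y)
    (hφ'' : HasDerivAt (deriv (deriv φ)) φ''' y)
    (hu : DifferentiableAt ℝ u y) (hu' : DifferentiableAt ℝ (deriv u) y)
    (hode : -deriv (deriv u) y + a * u y = -(V₀ * φ y) + Ψ * φ y + F) :
    HasDerivAt
      (fun z => deriv (deriv φ) z * u z - deriv φ z * deriv u z + V₀ / 2 * φ z ^ 2 - F * φ z)
      ((φ''' - a * deriv φ y) * u y + Ψ * φ y * deriv φ y) y := by
  have h := ((hφ''.fun_mul hu.hasDerivAt).fun_sub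
    (hφ'.hasDerivAt.fun_mul hu'.hasDerivAt)).fun_add
    ((hφ.hasDerivAt.fun_pow 2).const_mul (V₀ / 2)) |>.fun_sub (hφ.hasDerivAt.const_mul F)
  refine h.congr_deriv ?_
  linear_combination deriv φ y * hode

theorem two_add_sq_div_two_le_exp_add_exp_neg (s : ℝ) :
    2 + s ^ 2 / 2 ≤ exp s + exp (-s) := by
  have key : ∀ t : ℝ, 0 ≤ t → 2 + t ^ 2 / 2 ≤ exp t + exp (-t) := fun t ht => by
    linarith [quadratic_le_exp_of_nonneg ht, add_one_le_exp (-t)]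
  rcases le_total 0 s with hs | hs
  · exact key s hs
  · simpa [add_comm] using key (-s) (neg_nonneg.2 hs)

theorem contDiff_W : ContDiff ℝ ∞ W := by
  unfold W
  fun_prop

theorem differentiable_deriv_W : Differentiable ℝ (deriv W) :=
  (contDiff_W.iterate_deriv 1).differentiable (by simp)

theorem differentiable_deriv_deriv_W : Differentiable ℝ (deriv (deriv W)) :=
  (contDiff_W.iterate_deriv 2).differentiable (by simp)

theorem deriv_W (ρ : ℝ) : deriv W ρ = ρ * (1 - ρ) * (1 - 2 * ρ) / 2 := by
  have h := ((hasDerivAt_pow 2 ρ).const_mul (1 / 4 : ℝ)).fun_mul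
    (((hasDerivAt_id' ρ).const_sub 1).fun_pow 2)
  rw [show W = fun ρ => 1 / 4 * ρ ^ 2 * (1 - ρ) ^ 2 from rfl, h.deriv]
  ring

theorem theta0_eq (y : ℝ) : theta0 y = (1 + exp (y / √2))⁻¹ := by
  have hx : y / √2 = y / (2 * √2) + y / (2 * √2) := by ring
  rw [theta0, tanh_eq, hx, exp_add, exp_neg]
  have := exp_pos (y / (2 * √2))
  field_simp
  ring

theorem theta0_mem_Icc (y : ℝ) : theta0 y ∈ Icc 0 1 := by
  rw [theta0_eq]
  have := exp_pos (y / √2)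
  constructor
  · positivity
  · exact inv_le_one_of_one_le₀ (by linarith)

theorem hasDerivAt_theta0 (y : ℝ) :
    HasDerivAt theta0 (-(theta0 y * (1 - theta0 y)) / √2) y := by
  have h := (((hasDerivAt_id' y).div_const √2).exp.const_add 1).fun_inv (by positivity)
  rw [show theta0 = fun y => (1 + exp (y / √2))⁻¹ from funext theta0_eq]
  refine h.congr_deriv ?_
  have := exp_pos (y / √2)
  field_simp
  ring

theorem differentiable_theta0 : Differentiable ℝ theta0 :=
  fun y => (hasDerivAt_theta0 y).differentiableAt

theorem deriv_theta0 : deriv theta0 = fun y => -(theta0 y * (1 - theta0 y)) / √2 :=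
  funext fun y => (hasDerivAt_theta0 y).deriv

theorem hasDerivAt_deriv_theta0 (y : ℝ) :
    HasDerivAt (deriv theta0) (-(1 - 2 * theta0 y) / √2 * deriv theta0 y) y := by
  have h :=
    (((hasDerivAt_theta0 y).fun_mul ((hasDerivAt_theta0 y).const_sub 1)).neg).div_const √2
  rw [deriv_theta0]
  exact h.congr_deriv (by ring)

theorem differentiable_deriv_theta0 : Differentiable ℝ (deriv theta0) :=
  fun y => (hasDerivAt_deriv_theta0 y).differentiableAt

theorem deriv_deriv_theta0 (y : ℝ) : deriv (deriv theta0) y = deriv W (theta0 y) := by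
  rw [(hasDerivAt_deriv_theta0 y).deriv, deriv_theta0, deriv_W]
  field_simp
  rw [sq_sqrt zero_le_two]
  ring

theorem hasDerivAt_deriv_deriv_theta0 (y : ℝ) :
    HasDerivAt (deriv (deriv theta0)) (deriv (deriv W) (theta0 y) * deriv theta0 y) y :=
  hasDerivAt_deriv_deriv_of_deriv_deriv_eq differentiable_deriv_W differentiable_theta0
    deriv_deriv_theta0 y

theorem hasDerivAt_deriv_deriv_deriv_theta0 (y : ℝ) :
    HasDerivAt (deriv (deriv (deriv theta0)))
      (deriv (deriv (deriv W)) (theta0 y) * deriv theta0 y ^ 2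
        + deriv (deriv W) (theta0 y) * deriv (deriv theta0) y) y :=
  hasDerivAt_deriv_deriv_deriv_of_deriv_deriv_eq differentiable_deriv_W
    differentiable_deriv_deriv_W differentiable_theta0 differentiable_deriv_theta0
    deriv_deriv_theta0 y

theorem theta0_mul_one_sub_theta0_le (y : ℝ) :
    theta0 y * (1 - theta0 y) ≤ 4 * (1 + y ^ 2)⁻¹ := by
  -- `θ₀ (1 - θ₀) = (e^s + 2 + e^{-s})⁻¹` with `s = y / √2`
  have he := exp_pos (y / √2)
  have hb := two_add_sq_div_two_le_exp_add_exp_neg (y / √2)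
  rw [exp_neg, div_pow, sq_sqrt zero_le_two] at hb
  rw [theta0_eq]
  field_simp at hb ⊢
  nlinarith

theorem integrable_deriv_theta0 : Integrable (deriv theta0) := by
  refine ((integrable_inv_one_add_sq.const_mul 4).div_const √2).mono'
    differentiable_deriv_theta0.continuous.aestronglyMeasurable (ae_of_all _ fun y => ?_)
  obtain ⟨h0, h1⟩ := theta0_mem_Icc y
  rw [deriv_theta0, norm_div, norm_neg, Real.norm_of_nonneg (by nlinarith),
    Real.norm_of_nonneg (sqrt_nonneg 2)]
  exact div_le_div_of_nonneg_right (theta0_mul_one_sub_theta0_le y) (sqrt_nonneg 2)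

theorem exists_abs_comp_theta0_le {h : ℝ → ℝ} (hh : ContinuousOn h (Icc 0 1)) :
    ∃ C, ∀ y, |h (theta0 y)| ≤ C :=
  let ⟨C, hC⟩ := isCompact_Icc.exists_bound_of_continuousOn hh
  ⟨C, fun y => hC _ (theta0_mem_Icc y)⟩

theorem exists_abs_deriv_theta0_le : ∃ C, ∀ y, |deriv theta0 y| ≤ C := by
  simpa only [deriv_theta0] using
    exists_abs_comp_theta0_le (h := fun ρ => -(ρ * (1 - ρ)) / √2) (by fun_prop)

theorem integrable_comp_theta0_mul_deriv_theta0 {h : ℝ → ℝ}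
    (hh : ContinuousOn h (Icc 0 1)) :
    Integrable fun y => h (theta0 y) * deriv theta0 y :=
  let ⟨_, hC⟩ := exists_abs_comp_theta0_le hh
  integrable_deriv_theta0.bdd_mul
    (hh.comp_continuous differentiable_theta0.continuous theta0_mem_Icc).aestronglyMeasurable
    (ae_of_all _ hC)

theorem integrable_sq_deriv_theta0 : Integrable fun y => deriv theta0 y ^ 2 :=
  (integrable_comp_theta0_mul_deriv_theta0 (h := fun ρ => -(ρ * (1 - ρ)) / √2)
    (by fun_prop)).congr (ae_of_all _ fun y => by simp only [sq, deriv_theta0])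

theorem integrable_deriv_deriv_theta0 : Integrable (deriv (deriv theta0)) :=
  (integrable_comp_theta0_mul_deriv_theta0 (h := fun ρ => -(1 - 2 * ρ) / √2)
    (by fun_prop)).congr (ae_of_all _ fun y => (hasDerivAt_deriv_theta0 y).deriv.symm)

theorem integrable_deriv_deriv_deriv_theta0 : Integrable (deriv (deriv (deriv theta0))) :=
  (integrable_comp_theta0_mul_deriv_theta0
    differentiable_deriv_deriv_W.continuous.continuousOn).congr
    (ae_of_all _ fun y => (hasDerivAt_deriv_deriv_theta0 y).deriv.symm)

/-- Solvability identity for the first corrector of the inner expansion. -/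
theorem first_corrector_solvability_identity
    (V₀ F : ℝ)
    (Ψ₀ : ℝ → ℝ) (hΨ₀ : ContDiff ℝ 1 Ψ₀)
    (hΨ₀b : ∃ M : ℝ, ∀ y : ℝ, |Ψ₀ y| ≤ M ∧ |deriv Ψ₀ y| ≤ M)
    (θ₁ : ℝ → ℝ) (hθ₁ : ContDiff ℝ 3 θ₁)
    (hθ₁b : ∃ M : ℝ, ∀ y : ℝ, |θ₁ y| ≤ M ∧ |deriv θ₁ y| ≤ M ∧
      |deriv (deriv θ₁) y| ≤ M ∧ |deriv (deriv (deriv θ₁)) y| ≤ M)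
    (hODE : ∀ y : ℝ, -(deriv (deriv θ₁) y) + deriv (deriv W) (theta0 y) * θ₁ y =
      -(V₀ * deriv theta0 y) + Ψ₀ y * deriv theta0 y + F) :
    (∫ y : ℝ, deriv (deriv (deriv W)) (theta0 y) * (deriv theta0 y)^2 * θ₁ y)
      + (∫ y : ℝ, Ψ₀ y * deriv theta0 y * deriv (deriv theta0) y) = 0 := by
  obtain ⟨M, hM⟩ := hθ₁b
  obtain ⟨N, hN⟩ := hΨ₀b
  obtain ⟨B, hB⟩ := exists_abs_deriv_theta0_le
  have hW''' : Continuous (deriv (deriv (deriv W))) := (contDiff_W.iterate_deriv 3).continuous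
  obtain ⟨A, hA⟩ := exists_abs_comp_theta0_le hW'''.continuousOn
  have hθ₁c : AEStronglyMeasurable θ₁ := hθ₁.continuous.aestronglyMeasurable
  have hθ₁'c : AEStronglyMeasurable (deriv θ₁) :=
    (hθ₁.continuous_deriv (by norm_num)).aestronglyMeasurable
  have h₁ : Integrable fun y => deriv (deriv (deriv W)) (theta0 y) * deriv theta0 y ^ 2 * θ₁ y :=
    (integrable_sq_deriv_theta0.bdd_mul
      (hW'''.comp differentiable_theta0.continuous).aestronglyMeasurable (ae_of_all _ hA)).mul_bdd
      hθ₁c (ae_of_all _ fun y => (hM y).1)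
  have h₂ : Integrable fun y => Ψ₀ y * deriv theta0 y * deriv (deriv theta0) y := by
    simpa only [mul_assoc] using (integrable_deriv_deriv_theta0.bdd_mul
      differentiable_deriv_theta0.continuous.aestronglyMeasurable (ae_of_all _ hB)).bdd_mul
      hΨ₀.continuous.aestronglyMeasurable (ae_of_all _ fun y => (hN y).1)
  have hG := (((integrable_deriv_deriv_deriv_theta0.mul_bdd hθ₁c
    (ae_of_all _ fun y => (hM y).1)).sub
    (integrable_deriv_deriv_theta0.mul_bdd hθ₁'c (ae_of_all _ fun y => (hM y).2.1))).add
    (integrable_sq_deriv_theta0.const_mul (V₀ / 2))).sub (integrable_deriv_theta0.const_mul F)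
  have hG' (y : ℝ) := (hasDerivAt_solvability_primitive
    (hasDerivAt_deriv_theta0 y).differentiableAt (hasDerivAt_deriv_deriv_theta0 y).differentiableAt
    (hasDerivAt_deriv_deriv_deriv_theta0 y) (hθ₁.differentiable (by norm_num) y)
    ((hθ₁.of_le (by norm_num)).differentiable_deriv_two y) (hODE y)).congr_deriv
    (show _ = deriv (deriv (deriv W)) (theta0 y) * deriv theta0 y ^ 2 * θ₁ y
      + Ψ₀ y * deriv theta0 y * deriv (deriv theta0) y by ring)
  rw [← integral_add h₁ h₂]
  exact integral_eq_zero_of_hasDerivAt_of_integrable hG' (h₁.add h₂) hG
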